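/- Let H be a weak Hopf algebra. Then the coinvariants of H under its own right regular coaction equal H^L, i.e. H^{co H} := {h ∈ H | Δ(h) = h1₍₁₎ ⊗ 1₍₂₎} = Im(Π^L). -/
import Mathlib


open TensorProduct LinearMap

/-- A weak bialgebra over a commutative ring `k`: a `k`-algebra with a
coalgebra structure whose comultiplication is multiplicative, the
compatibility of the counit with multiplication and of the unit with
comultiplication being weakened to the weak bialgebra axioms. -/
structure WeakBialgebra (k H : Type) [CommRing k] [Ring H] [Algebra k H] where
  comul : H →ₗ[k] H ⊗[k] H
  counit : H →ₗ[k] k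
  coassoc : ∀ h, (TensorProduct.assoc k H H H) ((rTensor H comul) (comul h)) =
    (lTensor H comul) (comul h)
  counit_comul : ∀ h, (TensorProduct.lid k H) ((rTensor H counit) (comul h)) = h
  comul_counit : ∀ h, (TensorProduct.rid k H) ((lTensor H counit) (comul h)) = h
  comul_mul : ∀ g h : H, comul (g * h) = comul g * comul h
  /-- `Δ²(1) = (Δ(1)⊗1)(1⊗Δ(1))` -/
  weak_unit_l : rTensor H comul (comul 1) =
    (comul 1 ⊗ₜ[k] (1 : H)) *
      ((TensorProduct.assoc k H H H).symm ((1 : H) ⊗ₜ[k] comul 1))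
  /-- `Δ²(1) = (1⊗Δ(1))(Δ(1)⊗1)` -/
  weak_unit_r : rTensor H comul (comul 1) =
    ((TensorProduct.assoc k H H H).symm ((1 : H) ⊗ₜ[k] comul 1)) *
      (comul 1 ⊗ₜ[k] (1 : H))
  /-- `ε(ghl) = ε(g h₍₁₎) ε(h₍₂₎ l)` -/
  weak_counit_l : ∀ g h l : H, counit (g * h * l) =
    (LinearMap.mul' k k) ((TensorProduct.map (counit ∘ₗ mulLeft k g)
      (counit ∘ₗ mulRight k l)) (comul h))
  /-- `ε(ghl) = ε(g h₍₂₎) ε(h₍₁₎ l)` -/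
  weak_counit_r : ∀ g h l : H, counit (g * h * l) =
    (LinearMap.mul' k k) ((TensorProduct.map (counit ∘ₗ mulRight k l)
      (counit ∘ₗ mulLeft k g)) (comul h))

/-- A right `H`-comodule algebra over a weak bialgebra `H`. -/
structure ComoduleAlgebra (k H A : Type) [CommRing k] [Ring H] [Algebra k H]
    [Ring A] [Algebra k A] (W : WeakBialgebra k H) where
  rho : A →ₗ[k] A ⊗[k] H
  coassoc : ∀ a, (TensorProduct.assoc k A H H) ((rTensor H rho) (rho a)) =
    (lTensor A W.comul) (rho a)
  counit : ∀ a, (TensorProduct.rid k A) ((lTensor A W.counit) (rho a)) = a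
  rho_mul : ∀ a b : A, rho (a * b) = rho a * rho b
  /-- `ρ²(1) = 1₍[0]₎ ⊗ 1₍[1]₎1₍₁₎ ⊗ 1₍₂₎` -/
  weak : rTensor H rho (rho 1) =
    ((rho 1) ⊗ₜ[k] (1 : H)) *
      ((TensorProduct.assoc k A H H).symm ((1 : A) ⊗ₜ[k] W.comul 1))

variable (k H : Type) [CommRing k] [Ring H] [Algebra k H]

/-- `Π^L(h) = ε(1₍₁₎ h) 1₍₂₎`. -/
noncomputable def PiL (W : WeakBialgebra k H) : H → H := fun h =>
  (TensorProduct.lid k H)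
    ((TensorProduct.map (W.counit ∘ₗ mulRight k h) LinearMap.id) (W.comul 1))

/-- `Π^R(h) = 1₍₁₎ ε(h 1₍₂₎)`. -/
noncomputable def PiR (W : WeakBialgebra k H) : H → H := fun h =>
  (TensorProduct.rid k H)
    ((TensorProduct.map LinearMap.id (W.counit ∘ₗ mulLeft k h)) (W.comul 1))

/-- A weak Hopf algebra: a weak bialgebra with an antipode `S` satisfying
`h₍₁₎S(h₍₂₎) = Π^L(h)`, `S(h₍₁₎)h₍₂₎ = Π^R(h)` and
`S(h₍₁₎)h₍₂₎S(h₍₃₎) = S(h)`. -/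
structure WeakHopfAlgebra (k H : Type) [CommRing k] [Ring H] [Algebra k H]
    extends WeakBialgebra k H where
  S : H →ₗ[k] H
  S_left : ∀ h : H, LinearMap.mul' k H
    ((TensorProduct.map LinearMap.id S) (comul h)) = PiL k H toWeakBialgebra h
  S_right : ∀ h : H, LinearMap.mul' k H
    ((TensorProduct.map S LinearMap.id) (comul h)) = PiR k H toWeakBialgebra h
  S_mid : ∀ h : H, LinearMap.mul' k H
    ((TensorProduct.map (LinearMap.mul' k H ∘ₗ TensorProduct.map S LinearMap.id)
      S) ((rTensor H comul) (comul h))) = S h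

lemma aux_mul_pull (S : H →ₗ[k] H) (h : H) (t : H ⊗[k] H) :
    LinearMap.mul' k H ((TensorProduct.map LinearMap.id S) ((h ⊗ₜ[k] (1 : H)) * t)) =
      h * LinearMap.mul' k H ((TensorProduct.map LinearMap.id S) t) := by
  induction t using TensorProduct.induction_on with
  | zero => simp
  | tmul a b =>
      simp [Algebra.TensorProduct.tmul_mul_tmul, mul_assoc]
  | add x y hx hy => simp [mul_add, hx, hy]

lemma aux_PiL_one (W : WeakBialgebra k H) : PiL k H W 1 = 1 := by
  have := W.counit_comul 1
  simpa [PiL, LinearMap.rTensor, LinearMap.mulRight_one, LinearMap.comp_id] using this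

lemma aux_key (W : WeakBialgebra k H) (g : H) (s t : H ⊗[k] H) :
    ((TensorProduct.lid k (H ⊗[k] H)) ∘ₗ
        TensorProduct.map (W.counit ∘ₗ mulRight k g) LinearMap.id)
      ((TensorProduct.assoc k H H H)
        ((s ⊗ₜ[k] (1 : H)) * ((TensorProduct.assoc k H H H).symm ((1 : H) ⊗ₜ[k] t)))) =
    (((TensorProduct.lid k H ∘ₗ
        TensorProduct.map (W.counit ∘ₗ mulRight k g) LinearMap.id) s) ⊗ₜ[k] (1 : H)) * t := by
  induction s using TensorProduct.induction_on with
  | zero => simp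
  | tmul a b =>
      induction t using TensorProduct.induction_on with
      | zero => simp
      | tmul c d =>
          simp [Algebra.TensorProduct.tmul_mul_tmul, TensorProduct.assoc_symm_tmul,
            TensorProduct.assoc_tmul, TensorProduct.smul_tmul', smul_mul_assoc]
      | add x y hx hy =>
          simp only [TensorProduct.tmul_add, mul_add, map_add, hx, hy]
  | add x y hx hy =>
      simp only [TensorProduct.add_tmul, add_mul, map_add, hx, hy]

lemma aux_comp (W : WeakBialgebra k H) (g : H) :
    W.comul ∘ₗ ((TensorProduct.lid k H) ∘ₗ
        TensorProduct.map (W.counit ∘ₗ mulRight k g) LinearMap.id) =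
      ((TensorProduct.lid k (H ⊗[k] H)) ∘ₗ
        TensorProduct.map (W.counit ∘ₗ mulRight k g) LinearMap.id) ∘ₗ
        lTensor H W.comul := by
  apply TensorProduct.ext'
  intro a b
  simp [TensorProduct.smul_tmul', map_smul]

/-- for a weak Hopf algebra `H`, the coinvariants of `H` under
its right regular coaction (given by `Δ`) coincide with
`H^L = Im(Π^L)`:  `{h | Δ(h) = h1₍₁₎ ⊗ 1₍₂₎} = Im(Π^L)`. -/
theorem coinvariants_eq_HL (Wh : WeakHopfAlgebra k H) :
    {h : H | Wh.comul h = (h ⊗ₜ[k] (1 : H)) * Wh.comul 1} =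
      Set.range (PiL k H Wh.toWeakBialgebra) := by
  ext h
  simp only [Set.mem_setOf_eq, Set.mem_range]
  constructor
  · intro hh
    refine ⟨h, ?_⟩
    have h1 := Wh.S_left h
    have h2 := Wh.S_left 1
    rw [hh, aux_mul_pull, h2, aux_PiL_one] at h1
    rw [← h1, mul_one]
  · rintro ⟨g, rfl⟩
    have hP : PiL k H Wh.toWeakBialgebra g =
        ((TensorProduct.lid k H) ∘ₗ
          TensorProduct.map (Wh.counit ∘ₗ mulRight k g) LinearMap.id)
          (Wh.comul 1) := rfl
    rw [hP]
    calc Wh.comul (((TensorProduct.lid k H) ∘ₗ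
          TensorProduct.map (Wh.counit ∘ₗ mulRight k g) LinearMap.id) (Wh.comul 1))
        = (Wh.comul ∘ₗ ((TensorProduct.lid k H) ∘ₗ
          TensorProduct.map (Wh.counit ∘ₗ mulRight k g) LinearMap.id)) (Wh.comul 1) := rfl
      _ = (((TensorProduct.lid k (H ⊗[k] H)) ∘ₗ
          TensorProduct.map (Wh.counit ∘ₗ mulRight k g) LinearMap.id) ∘ₗ
          lTensor H Wh.comul) (Wh.comul 1) := by rw [aux_comp]
      _ = ((TensorProduct.lid k (H ⊗[k] H)) ∘ₗ
          TensorProduct.map (Wh.counit ∘ₗ mulRight k g) LinearMap.id)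
          ((TensorProduct.assoc k H H H) ((rTensor H Wh.comul) (Wh.comul 1))) := by
            rw [Wh.coassoc 1]; rfl
      _ = ((TensorProduct.lid k (H ⊗[k] H)) ∘ₗ
          TensorProduct.map (Wh.counit ∘ₗ mulRight k g) LinearMap.id)
          ((TensorProduct.assoc k H H H) ((Wh.comul 1 ⊗ₜ[k] (1 : H)) *
            ((TensorProduct.assoc k H H H).symm ((1 : H) ⊗ₜ[k] Wh.comul 1)))) := by
            rw [Wh.weak_unit_l]
      _ = ((((TensorProduct.lid k H) ∘ₗ
          TensorProduct.map (Wh.counit ∘ₗ mulRight k g) LinearMap.id) (Wh.comul 1))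
          ⊗ₜ[k] (1 : H)) * Wh.comul 1 :=
            aux_key k H Wh.toWeakBialgebra g (Wh.comul 1) (Wh.comul 1)
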